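/- arXiv:2005.06372 — 6 statements merged into one kernel-verified Lean document; each statement's English description precedes it below -/
import Mathlib

section
/- For every real number q, the function y ↦ (e^{qy} − 1 − q(e^y − 1))·e^{−y}/(e^y − 1)² is Lebesgue integrable on the interval (−ln 2, ∞) if and only if q < 3. -/
/-!
Near `y = 0` the numerator is `O(y²)` by the second-order Taylor bound for `exp`, while
`|e^y - 1| ≥ |y| / 2` on `[-log 2, ∞)`, so the integrand is bounded on `(-log 2, log 2]`.
For `y ≥ log 2` the integrand is `O(e^{(max q 1 - 3) y})`, which is integrable when `q < 3`.
Conversely, for `q ≥ 3` and `y > 0` the numerator is at least its value `(e^y - 1)² (e^y + 2)`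
at `q = 3`, so the integrand is at least `1` on `(0, ∞)`.
-/

open MeasureTheory Real Set

theorem Real.abs_exp_sub_one_sub_id_le_sq_mul_exp (x : ℝ) :
    |exp x - 1 - x| ≤ x ^ 2 * exp |x| := by
  have h := Complex.norm_exp_sub_sum_le_norm_mul_exp (x : ℂ) 2
  norm_num [Finset.sum_range_succ] at h
  rwa [show Complex.exp x - (1 + x) = ((exp x - 1 - x : ℝ) : ℂ) by push_cast; ring,
    Complex.norm_real, Real.norm_eq_abs] at h

theorem Real.exp_sub_one_le_mul_exp (y : ℝ) : exp y - 1 ≤ y * exp y := by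
  have := mul_le_mul_of_nonneg_right (one_sub_le_exp_neg y) (exp_pos y).le
  rw [← exp_add, neg_add_cancel, exp_zero] at this
  linarith

theorem Real.abs_le_two_mul_abs_exp_sub_one {y : ℝ} (hy : -log 2 ≤ y) :
    |y| ≤ 2 * |exp y - 1| := by
  rcases le_or_gt 0 y with h | h
  · have := add_one_le_exp y
    rw [abs_of_nonneg h, abs_of_nonneg (by linarith)]
    linarith
  · have half_le : 1 / 2 ≤ exp y := by
      simpa [exp_neg, exp_log] using exp_le_exp.2 hy
    have := exp_sub_one_le_mul_exp y
    rw [abs_of_neg h, abs_of_neg (by linarith [exp_lt_one_iff.2 h])]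
    nlinarith

noncomputable def psiIntegrand (q y : ℝ) : ℝ :=
  (exp (q * y) - 1 - q * (exp y - 1)) * exp (-y) / (exp y - 1) ^ 2

namespace psiIntegrand

theorem measurable (q : ℝ) : Measurable (psiIntegrand q) := by
  unfold psiIntegrand
  fun_prop

theorem abs_numerator_le {q y : ℝ} (hy : |y| ≤ 1) :
    |exp (q * y) - 1 - q * (exp y - 1)| ≤ (q ^ 2 * exp |q| + |q|) * y ^ 2 := by
  have hqy : exp |q * y| ≤ exp |q| := by
    rw [abs_mul]
    exact exp_le_exp.2 (mul_le_of_le_one_right (abs_nonneg q) hy)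
  calc |exp (q * y) - 1 - q * (exp y - 1)|
      = |(exp (q * y) - 1 - q * y) - q * (exp y - 1 - y)| := by ring_nf
    _ ≤ |exp (q * y) - 1 - q * y| + |q| * |exp y - 1 - y| := by
      rw [← abs_mul]; exact abs_sub _ _
    _ ≤ (q * y) ^ 2 * exp |q| + |q| * y ^ 2 := by
      gcongr
      · exact (abs_exp_sub_one_sub_id_le_sq_mul_exp _).trans (by gcongr)
      · exact abs_exp_sub_one_sub_id_le hy
    _ = (q ^ 2 * exp |q| + |q|) * y ^ 2 := by ring

theorem abs_le_of_mem_Ioc {q y : ℝ} (hy : y ∈ Ioc (-log 2) (log 2)) :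
    |psiIntegrand q y| ≤ 8 * (q ^ 2 * exp |q| + |q|) := by
  set C := q ^ 2 * exp |q| + |q|
  have hlog : log 2 ≤ 1 := (log_le_sub_one_of_pos two_pos).trans (by norm_num)
  have hexp : exp (-y) ≤ 2 := by
    simpa [exp_log] using exp_le_exp.2 (show -y ≤ log 2 by linarith [hy.1])
  have hden : y ^ 2 ≤ 4 * (exp y - 1) ^ 2 := by
    have := abs_le_two_mul_abs_exp_sub_one hy.1.le
    nlinarith [abs_nonneg y, sq_abs y, sq_abs (exp y - 1)]
  have hnum := abs_numerator_le (q := q) (abs_le.2 ⟨by linarith [hy.1], hy.2.trans hlog⟩)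
  have hC : 0 ≤ C := by positivity
  calc |psiIntegrand q y|
      = |exp (q * y) - 1 - q * (exp y - 1)| * exp (-y) / (exp y - 1) ^ 2 := by
        rw [psiIntegrand, abs_div, abs_mul, abs_of_pos (exp_pos _), abs_pow, sq_abs]
    _ ≤ 8 * C * (exp y - 1) ^ 2 / (exp y - 1) ^ 2 := by
        refine div_le_div_of_nonneg_right ?_ (sq_nonneg _)
        calc _ ≤ C * y ^ 2 * 2 := mul_le_mul hnum hexp (exp_pos _).le (by positivity)
          _ ≤ 8 * C * (exp y - 1) ^ 2 := by nlinarith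
    _ ≤ 8 * C := by
        rw [mul_div_assoc]
        exact mul_le_of_le_one_right (by positivity) (div_self_le_one _)

theorem integrableOn_Ioc (q : ℝ) : IntegrableOn (psiIntegrand q) (Ioc (-log 2) (log 2)) :=
  IntegrableOn.of_bound measure_Ioc_lt_top (measurable q).aestronglyMeasurable _
    ((ae_restrict_iff' measurableSet_Ioc).2 (.of_forall fun _ hy => abs_le_of_mem_Ioc hy))

theorem abs_le_of_log_two_le {q r y : ℝ} (hqr : q ≤ r) (hr : 1 ≤ r) (hy : log 2 ≤ y) :
    |psiIntegrand q y| ≤ 4 * (1 + |q|) * exp ((r - 3) * y) := by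
  have hy0 : 0 ≤ y := (log_nonneg one_le_two).trans hy
  have two_le : 2 ≤ exp y := by simpa [exp_log] using exp_le_exp.2 hy
  have hqy : exp (q * y) ≤ exp (r * y) := exp_le_exp.2 (by nlinarith)
  have hry : exp y ≤ exp (r * y) := exp_le_exp.2 (by nlinarith)
  have hr1 : 1 ≤ exp (r * y) := one_le_exp (by positivity)
  have hnum : |exp (q * y) - 1 - q * (exp y - 1)| ≤ (1 + |q|) * exp (r * y) :=
    calc |exp (q * y) - 1 - q * (exp y - 1)|
        ≤ |exp (q * y) - 1| + |q| * |exp y - 1| := by rw [← abs_mul]; exact abs_sub _ _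
      _ ≤ exp (r * y) + |q| * exp (r * y) := by
        gcongr <;> rw [abs_le] <;> constructor <;> linarith [exp_pos (q * y), exp_pos y]
      _ = (1 + |q|) * exp (r * y) := by ring
  have hden : exp y ^ 2 / 4 ≤ (exp y - 1) ^ 2 := by nlinarith
  calc |psiIntegrand q y|
      = |exp (q * y) - 1 - q * (exp y - 1)| * exp (-y) / (exp y - 1) ^ 2 := by
        rw [psiIntegrand, abs_div, abs_mul, abs_of_pos (exp_pos _), abs_pow, sq_abs]
    _ ≤ (1 + |q|) * exp (r * y) * exp (-y) / (exp y ^ 2 / 4) := by gcongr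
    _ = 4 * (1 + |q|) * exp ((r - 3) * y) := by
        rw [show (r - 3) * y = r * y + -y - 2 * y by ring, exp_sub, exp_add,
          show 2 * y = y + y by ring, exp_add]
        field_simp

theorem integrableOn_Ioi {q : ℝ} (hq : q < 3) : IntegrableOn (psiIntegrand q) (Ioi (log 2)) := by
  have hr : max q 1 - 3 < 0 := by linarith [max_lt hq (by norm_num : (1 : ℝ) < 3)]
  refine ((integrableOn_exp_mul_Ioi hr (log 2)).const_mul (4 * (1 + |q|))).mono'
    (measurable q).aestronglyMeasurable ((ae_restrict_iff' measurableSet_Ioi).2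
      (.of_forall fun _ hy => ?_))
  exact abs_le_of_log_two_le (le_max_left q 1) (le_max_right q 1) (le_of_lt hy)

theorem one_le {q y : ℝ} (hq : 3 ≤ q) (hy : 0 < y) : 1 ≤ psiIntegrand q y := by
  set t := exp y
  have ht : 1 < t := one_lt_exp_iff.2 hy
  have hexp3 : exp (3 * y) = t ^ 3 := by rw [← exp_nat_mul]; norm_num
  have hqy : t ^ 3 * (1 + (q - 3) * y) ≤ exp (q * y) := by
    rw [← hexp3, show q * y = 3 * y + (q - 3) * y by ring, exp_add]
    gcongr
    linarith [add_one_le_exp ((q - 3) * y)]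
  have hyt : t - 1 ≤ y * t ^ 3 :=
    (exp_sub_one_le_mul_exp y).trans (by gcongr; exact le_self_pow₀ ht.le three_ne_zero)
  have hnum : (t - 1) ^ 2 * t ≤ exp (q * y) - 1 - q * (t - 1) := by nlinarith
  rw [psiIntegrand, exp_neg, le_div_iff₀ (by nlinarith), one_mul, le_mul_inv_iff₀ (exp_pos y)]
  exact hnum

theorem not_integrableOn_Ioi_zero {q : ℝ} (hq : 3 ≤ q) :
    ¬ IntegrableOn (psiIntegrand q) (Ioi 0) := by
  intro h
  have : IntegrableOn (fun _ => (1 : ℝ)) (Ioi (0 : ℝ)) :=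
    Integrable.mono h (by fun_prop) ((ae_restrict_iff' measurableSet_Ioi).2
      (.of_forall fun y hy => by simpa using (one_le hq (mem_Ioi.1 hy)).trans (le_abs_self _)))
  simp at this

end psiIntegrand

theorem stmt_0 (q : ℝ) :
    IntegrableOn
      (fun y : ℝ =>
        (Real.exp (q * y) - 1 - q * (Real.exp y - 1)) * Real.exp (-y) / (Real.exp y - 1) ^ 2)
      (Set.Ioi (-Real.log 2)) ↔ q < 3 := by
  change IntegrableOn (psiIntegrand q) _ ↔ _
  have hlog : 0 < log 2 := log_pos one_lt_two
  constructor
  · intro h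
    by_contra! hq
    exact psiIntegrand.not_integrableOn_Ioi_zero hq (h.mono_set (Ioi_subset_Ioi (by linarith)))
  · intro hq
    rw [← Ioc_union_Ioi_eq_Ioi (by linarith : -log 2 ≤ log 2)]
    exact (psiIntegrand.integrableOn_Ioc q).union (psiIntegrand.integrableOn_Ioi hq)
end

section
/- For every real q, ∫_{−ln 2}^{∞} [1 − e^{2y} + (q(e^y − 1) − (q − 2)(e^{3y} − e^{2y}))·1_{y < ln 2}]·e^{−y}/(e^y − 1)² dy = 2 + 2·ln 2 − q·(2·ln 2 + 3/2). -/
open MeasureTheory Set Filter Real Interval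

/-! On `(-log 2, log 2)` the integrand simplifies (away from `y = 0`) to `2 - q + (1 - q) e^{-y}`,
and on `[log 2, ∞)` to `e^{-y} - 2 / (e^y - 1)`, which has the antiderivative
`-e^{-y} - 2 log (1 - e^{-y})` tending to `0` at infinity. That tail integrand is nonpositive,
so its integrability comes for free from the antiderivative. -/

lemma hasDerivAt_neg_exp_neg_sub_two_mul_log_one_sub_exp_neg {y : ℝ} (hy : 0 < y) :
    HasDerivAt (fun y => -exp (-y) - 2 * log (1 - exp (-y)))
      (exp (-y) - 2 / (exp y - 1)) y := by
  have hexp : HasDerivAt (fun y => exp (-y)) (-exp (-y)) y := by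
    simpa using (hasDerivAt_neg y).exp
  have hpos : 0 < 1 - exp (-y) := sub_pos.2 (exp_lt_one_iff.2 (neg_lt_zero.2 hy))
  refine (hexp.neg.sub (((hexp.const_sub 1).log hpos.ne').const_mul 2)).congr_deriv ?_
  have hu : exp y - 1 ≠ 0 := (sub_pos.2 (one_lt_exp_iff.2 hy)).ne'
  rw [exp_neg] at hpos ⊢
  field_simp

lemma exp_neg_sub_two_div_exp_sub_one_nonpos {y : ℝ} (hy : 0 < y) :
    exp (-y) - 2 / (exp y - 1) ≤ 0 := by
  have hu : 0 < exp y - 1 := sub_pos.2 (one_lt_exp_iff.2 hy)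
  rw [sub_nonpos, exp_neg, inv_eq_one_div]
  gcongr <;> linarith

lemma tendsto_neg_exp_neg_sub_two_mul_log_one_sub_exp_neg :
    Tendsto (fun y => -exp (-y) - 2 * log (1 - exp (-y))) atTop (nhds 0) := by
  have h := tendsto_exp_neg_atTop_nhds_zero
  have hlog : Tendsto (fun y => log (1 - exp (-y))) atTop (nhds 0) := by
    have h1 : Tendsto (fun y => 1 - exp (-y)) atTop (nhds 1) := by simpa using h.const_sub 1
    simpa using h1.log one_ne_zero
  simpa using h.neg.sub (hlog.const_mul 2)

lemma integrableOn_Ioi_exp_neg_sub_two_div_exp_sub_one {a : ℝ} (ha : 0 < a) :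
    IntegrableOn (fun y => exp (-y) - 2 / (exp y - 1)) (Ioi a) :=
  integrableOn_Ioi_deriv_of_nonpos'
    (fun _ hy => hasDerivAt_neg_exp_neg_sub_two_mul_log_one_sub_exp_neg (ha.trans_le hy))
    (fun _ hy => exp_neg_sub_two_div_exp_sub_one_nonpos (ha.trans hy))
    tendsto_neg_exp_neg_sub_two_mul_log_one_sub_exp_neg

lemma integral_Ioi_exp_neg_sub_two_div_exp_sub_one {a : ℝ} (ha : 0 < a) :
    ∫ y in Ioi a, (exp (-y) - 2 / (exp y - 1)) = exp (-a) + 2 * log (1 - exp (-a)) := by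
  rw [integral_Ioi_of_hasDerivAt_of_nonpos'
    (fun _ hy => hasDerivAt_neg_exp_neg_sub_two_mul_log_one_sub_exp_neg (ha.trans_le hy))
    (fun _ hy => exp_neg_sub_two_div_exp_sub_one_nonpos (ha.trans hy))
    tendsto_neg_exp_neg_sub_two_mul_log_one_sub_exp_neg]
  ring

lemma integral_const_add_mul_exp_neg (a b c d : ℝ) :
    ∫ y in a..b, (c + d * exp (-y)) = (b - a) * c + d * (exp (-a) - exp (-b)) := by
  rw [intervalIntegral.integral_add intervalIntegrable_const
    (((by fun_prop : Continuous fun y => exp (-y)).intervalIntegrable a b).const_mul d),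
    intervalIntegral.integral_const_mul, intervalIntegral.integral_comp_neg, integral_exp]
  simp

lemma exp_neg_log_two : exp (-log 2) = 1 / 2 := by
  rw [exp_neg, exp_log two_pos, one_div]

noncomputable def tiltedIntegrand (q y : ℝ) : ℝ :=
  (1 - exp (2 * y)
      + (q * (exp y - 1) - (q - 2) * (exp (3 * y) - exp (2 * y)))
        * (if y < log 2 then (1 : ℝ) else 0))
    * exp (-y) / (exp y - 1) ^ 2

lemma tiltedIntegrand_of_lt_log_two (q : ℝ) {y : ℝ} (hy₀ : y ≠ 0) (hy : y < log 2) :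
    tiltedIntegrand q y = 2 - q + (1 - q) * exp (-y) := by
  have hu : exp y - 1 ≠ 0 := sub_ne_zero.2 (mt (exp_eq_one_iff _).1 hy₀)
  rw [tiltedIntegrand, if_pos hy, exp_neg, show (3 : ℝ) = (3 : ℕ) by norm_num,
    show (2 : ℝ) * y = ((2 : ℕ) : ℝ) * y by norm_num, exp_nat_mul, exp_nat_mul]
  field_simp
  ring

lemma tiltedIntegrand_of_log_two_le (q : ℝ) {y : ℝ} (hy : log 2 ≤ y) :
    tiltedIntegrand q y = exp (-y) - 2 / (exp y - 1) := by
  have hu : exp y - 1 ≠ 0 :=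
    sub_ne_zero.2 (mt (exp_eq_one_iff _).1 ((log_pos one_lt_two).trans_le hy).ne')
  rw [tiltedIntegrand, if_neg hy.not_gt, exp_neg,
    show (2 : ℝ) * y = ((2 : ℕ) : ℝ) * y by norm_num, exp_nat_mul]
  field_simp
  ring

lemma tiltedIntegrand_ae_eq (q : ℝ) :
    tiltedIntegrand q =ᵐ[volume.restrict (Ι (-log 2) (log 2))]
      fun y => 2 - q + (1 - q) * exp (-y) := by
  rw [Filter.EventuallyEq, ae_restrict_iff' measurableSet_uIoc]
  filter_upwards [volume.ae_ne 0, volume.ae_ne (log 2)] with y hy₀ hy₁ hy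
  have hlog : -log 2 ≤ log 2 := by linarith [log_pos one_lt_two]
  rw [uIoc_of_le hlog] at hy
  exact tiltedIntegrand_of_lt_log_two q hy₀ (hy.2.lt_of_ne hy₁)

lemma intervalIntegrable_tiltedIntegrand (q : ℝ) :
    IntervalIntegrable (tiltedIntegrand q) volume (-log 2) (log 2) :=
  ((by fun_prop : Continuous fun y => 2 - q + (1 - q) * exp (-y)).intervalIntegrable _ _).congr_ae
    (tiltedIntegrand_ae_eq q).symm

lemma integral_tiltedIntegrand_interval (q : ℝ) :
    ∫ y in -log 2..log 2, tiltedIntegrand q y = 2 * log 2 * (2 - q) + 3 / 2 * (1 - q) := by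
  rw [intervalIntegral.integral_congr_ae_restrict (tiltedIntegrand_ae_eq q),
    integral_const_add_mul_exp_neg, neg_neg, exp_log two_pos, exp_neg_log_two]
  ring

lemma integrableOn_Ioi_log_two_tiltedIntegrand (q : ℝ) :
    IntegrableOn (tiltedIntegrand q) (Ioi (log 2)) :=
  (integrableOn_Ioi_exp_neg_sub_two_div_exp_sub_one (log_pos one_lt_two)).congr_fun
    (fun _ hy => (tiltedIntegrand_of_log_two_le q (le_of_lt hy)).symm) measurableSet_Ioi

lemma integral_Ioi_log_two_tiltedIntegrand (q : ℝ) :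
    ∫ y in Ioi (log 2), tiltedIntegrand q y = 1 / 2 - 2 * log 2 := by
  rw [setIntegral_congr_fun measurableSet_Ioi
      (fun _ hy => tiltedIntegrand_of_log_two_le q (le_of_lt hy)),
    integral_Ioi_exp_neg_sub_two_div_exp_sub_one (log_pos one_lt_two), exp_neg_log_two,
    show (1 : ℝ) - 1 / 2 = (2 : ℝ)⁻¹ by norm_num, log_inv]
  ring

theorem stmt_9 (q : ℝ) :
    ∫ y in Set.Ioi (-Real.log 2),
      (1 - Real.exp (2 * y)
          + (q * (Real.exp y - 1) - (q - 2) * (Real.exp (3 * y) - Real.exp (2 * y)))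
            * (if y < Real.log 2 then (1 : ℝ) else 0))
        * Real.exp (-y) / (Real.exp y - 1) ^ 2
      = 2 + 2 * Real.log 2 - q * (2 * Real.log 2 + 3/2) := by
  change ∫ y in Ioi (-log 2), tiltedIntegrand q y = _
  rw [← intervalIntegral.integral_interval_add_Ioi' (intervalIntegrable_tiltedIntegrand q)
      (integrableOn_Ioi_log_two_tiltedIntegrand q),
    integral_tiltedIntegrand_interval, integral_Ioi_log_two_tiltedIntegrand]
  ring
end

section
/- ∫_{1/2}^{2} (x^{5/2} − 1)/(x²·(x − 1)) dx + ∫_{0}^{1/2} √x/(x − 1) dx = ∫_{0}^{2} (√x − 1)/(x − 1) dx + ln 2 + 3/2. -/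
/-!
Away from `x = 1`, each integrand is `1 / (√x + 1)` plus an elementary rational function:
writing `x = s²`, the factor `s - 1` cancels from `(s - 1) / (s² - 1)`, `s / (s² - 1)` and
`(s⁵ - 1) / (s⁴ (s² - 1))`. The `1 / (√x + 1)` parts over `[0, 1/2]` and `[1/2, 2]` add up to the
right-hand integral, and the rational parts contribute `log 4 + 3/2` and `log (1/2)`.
-/

open MeasureTheory intervalIntegral Real Set
open scoped Interval

lemma sqrt_sub_one_div_sub_one {x : ℝ} (hx : 0 ≤ x) (h1 : x ≠ 1) :
    (√x - 1) / (x - 1) = 1 / (√x + 1) := by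
  rw [div_eq_div_iff (sub_ne_zero.2 h1) (by positivity)]
  linear_combination sq_sqrt hx

lemma sqrt_div_sub_one {x : ℝ} (hx : 0 ≤ x) (h1 : x ≠ 1) :
    √x / (x - 1) = 1 / (√x + 1) + 1 / (x - 1) := by
  have : x - 1 ≠ 0 := sub_ne_zero.2 h1
  field_simp
  linear_combination sq_sqrt hx

lemma rpow_five_halves_sub_one_div {x : ℝ} (hx : 0 < x) (h1 : x ≠ 1) :
    (x ^ ((5 : ℝ) / 2) - 1) / (x ^ 2 * (x - 1)) = 1 / (√x + 1) + 1 / x + 1 / x ^ 2 := by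
  obtain ⟨s, hs, rfl⟩ : ∃ s, 0 < s ∧ s ^ 2 = x := ⟨√x, sqrt_pos.2 hx, sq_sqrt hx.le⟩
  have h5 : (s ^ 2) ^ ((5 : ℝ) / 2) = s ^ 5 := by
    rw [← rpow_natCast, ← rpow_mul hs.le]; norm_num
  have hs1 : s - 1 ≠ 0 := fun h => h1 (by rw [sub_eq_zero.1 h]; norm_num)
  have : s ^ 2 - 1 = (s - 1) * (s + 1) := by ring
  rw [h5, sqrt_sq hs.le, this]
  field_simp
  ring

lemma integral_congr_of_ne {f g : ℝ → ℝ} {a b c : ℝ} (h : ∀ x ∈ Ι a b, x ≠ c → f x = g x) :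
    ∫ x in a..b, f x = ∫ x in a..b, g x :=
  integral_congr_ae <| (Measure.ae_ne volume c).mono fun x hc hx => h x hx hc

lemma integral_one_div_sq_of_pos {a b : ℝ} (ha : 0 < a) (hb : 0 < b) :
    ∫ x in a..b, 1 / x ^ 2 = 1 / a - 1 / b := by
  have := integral_zpow (n := -2) (Or.inr ⟨by norm_num, notMem_uIcc_of_lt ha hb⟩)
  simp only [zpow_neg, zpow_ofNat] at this
  rw [integral_congr fun x _ => one_div (x ^ 2), this]
  norm_num
  ring

lemma integral_one_div_sub_one {b : ℝ} (hb : b < 1) :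
    ∫ x in (0 : ℝ)..b, 1 / (x - 1) = log (1 - b) := by
  rw [integral_comp_sub_right (fun x => 1 / x),
    integral_one_div (notMem_uIcc_of_gt (by norm_num) (by linarith))]
  congr 1
  ring

lemma continuous_one_div_sqrt_add_one : Continuous fun x : ℝ => 1 / (√x + 1) := by
  fun_prop (disch := intro x; positivity)

lemma intervalIntegrable_one_div_sqrt_add_one (a b : ℝ) :
    IntervalIntegrable (fun x => 1 / (√x + 1)) volume a b :=
  continuous_one_div_sqrt_add_one.intervalIntegrable a b

lemma integral_sqrt_sub_one_div_sub_one {b : ℝ} (hb : 0 ≤ b) :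
    ∫ x in (0 : ℝ)..b, (√x - 1) / (x - 1) = ∫ x in (0 : ℝ)..b, 1 / (√x + 1) :=
  integral_congr_of_ne (c := 1) fun x hx h1 =>
    sqrt_sub_one_div_sub_one (by rw [uIoc_of_le hb] at hx; exact hx.1.le) h1

lemma integral_sqrt_div_sub_one {b : ℝ} (hb0 : 0 ≤ b) (hb1 : b < 1) :
    ∫ x in (0 : ℝ)..b, √x / (x - 1) = (∫ x in (0 : ℝ)..b, 1 / (√x + 1)) + log (1 - b) := by
  have hne : ∀ x ∈ uIcc 0 b, x - 1 ≠ 0 := fun x hx => by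
    rw [uIcc_of_le hb0] at hx; exact sub_ne_zero.2 (hx.2.trans_lt hb1).ne
  rw [← integral_one_div_sub_one hb1, ← intervalIntegral.integral_add
    (intervalIntegrable_one_div_sqrt_add_one _ _) (intervalIntegrable_one_div hne (by fun_prop))]
  refine integral_congr_of_ne (c := 1) fun x hx h1 => sqrt_div_sub_one ?_ h1
  rw [uIoc_of_le hb0] at hx
  exact hx.1.le

lemma integral_rpow_five_halves_sub_one_div {a b : ℝ} (ha : 0 < a) (hb : 0 < b) :
    ∫ x in a..b, (x ^ ((5 : ℝ) / 2) - 1) / (x ^ 2 * (x - 1))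
      = (∫ x in a..b, 1 / (√x + 1)) + log (b / a) + (1 / a - 1 / b) := by
  have h0 : (0 : ℝ) ∉ uIcc a b := notMem_uIcc_of_lt ha hb
  have hne : ∀ x ∈ uIcc a b, x ≠ 0 := fun x hx h => h0 (h ▸ hx)
  have hinv : IntervalIntegrable (fun x => 1 / x) volume a b :=
    intervalIntegrable_one_div hne continuousOn_id
  have hinv_sq : IntervalIntegrable (fun x => 1 / x ^ 2) volume a b :=
    intervalIntegrable_one_div (fun x hx => pow_ne_zero 2 (hne x hx)) (by fun_prop)
  rw [integral_congr_of_ne (c := 1) (g := fun x => 1 / (√x + 1) + 1 / x + 1 / x ^ 2)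
      fun x hx h1 => rpow_five_halves_sub_one_div ((lt_min ha hb).trans hx.1) h1,
    intervalIntegral.integral_add ((intervalIntegrable_one_div_sqrt_add_one _ _).add hinv) hinv_sq,
    intervalIntegral.integral_add (intervalIntegrable_one_div_sqrt_add_one _ _) hinv,
    integral_one_div h0, integral_one_div_sq_of_pos ha hb]

theorem stmt_12 :
    (∫ x in (1/2 : ℝ)..2, (x ^ ((5 : ℝ)/2) - 1) / (x ^ 2 * (x - 1)))
      + (∫ x in (0 : ℝ)..(1/2), Real.sqrt x / (x - 1))
      = (∫ x in (0 : ℝ)..2, (Real.sqrt x - 1) / (x - 1)) + Real.log 2 + 3/2 := by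
  rw [integral_rpow_five_halves_sub_one_div (by norm_num) (by norm_num),
    integral_sqrt_div_sub_one (by norm_num) (by norm_num),
    integral_sqrt_sub_one_div_sub_one (by norm_num),
    ← integral_add_adjacent_intervals (a := 0) (b := 1 / 2) (c := 2)
      (intervalIntegrable_one_div_sqrt_add_one _ _) (intervalIntegrable_one_div_sqrt_add_one _ _)]
  have hlog : log (2 / (1 / 2)) + log (1 - 1 / 2) = log 2 := by
    rw [← log_mul (by norm_num) (by norm_num)]; norm_num
  linarith
end

section
/- ∫_{−ln 2}^{∞} (y·e^{2y} − (e^y − 1) + (e^y − 1)²·ln|e^y − 1|)·e^{−y}/(e^y − 1)² dy = 2. -/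
/-!
Off `y = 0` the integrand is `g₁ + g₂`, where `g₁ y = e^{-y} ((y - 1 + e^{-y}) / (1 - e^{-y})² + 1)`
is nonnegative because `1 - y ≤ e^{-y}`, and `g₂ y = e^{-y} log |e^y - 1|` has the sign of
`y - log 2`. They have the primitives `G₁ y = -y / (e^y - 1) - e^{-y}` and
`G₂ y = (1 - e^{-y}) log |1 - e^{-y}| - y e^{-y}`, continuous on all of `ℝ` (the singularity of
`G₁` at `0` is removable, that of `G₂` is of type `t log t`) and tending to `0` at `+∞`.
As derivatives of piecewise monotone functions `g₁` and `g₂` are integrable on `(-log 2, ∞)`,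
and the integral is `-(G₁ + G₂)(-log 2) = -(-2 log 2 - 2) - 2 log 2 = 2`.
-/

open MeasureTheory Filter Set Real Topology

section DerivativeIntegrability

variable {g g' : ℝ → ℝ} {a b c l : ℝ}

theorem integrableOn_Ioc_deriv_of_nonneg_off_point (hac : a ≤ c) (hcb : c ≤ b)
    (hcont : ContinuousOn g (Icc a b)) (hderiv : ∀ x ∈ Ioo a b \ {c}, HasDerivAt g (g' x) x)
    (hpos : ∀ x ∈ Ioo a b \ {c}, 0 ≤ g' x) : IntegrableOn g' (Ioc a b) := by
  have left : ∀ x ∈ Ioo a c, x ∈ Ioo a b \ {c} := fun x hx => ⟨⟨hx.1, hx.2.trans_le hcb⟩, hx.2.ne⟩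
  have right : ∀ x ∈ Ioo c b, x ∈ Ioo a b \ {c} :=
    fun x hx => ⟨⟨hac.trans_lt hx.1, hx.2⟩, hx.1.ne'⟩
  rw [← Ioc_union_Ioc_eq_Ioc hac hcb]
  exact (intervalIntegral.integrableOn_deriv_of_nonneg (hcont.mono (Icc_subset_Icc_right hcb))
      (fun x hx => hderiv x (left x hx)) fun x hx => hpos x (left x hx)).union
    (intervalIntegral.integrableOn_deriv_of_nonneg (hcont.mono (Icc_subset_Icc_left hac))
      (fun x hx => hderiv x (right x hx)) fun x hx => hpos x (right x hx))

theorem integrableOn_Ioi_deriv_of_nonneg_off_point (hac : a ≤ c)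
    (hcont : ContinuousOn g (Ici a)) (hderiv : ∀ x ∈ Ioi a \ {c}, HasDerivAt g (g' x) x)
    (hpos : ∀ x ∈ Ioi a \ {c}, 0 ≤ g' x) (hg : Tendsto g atTop (𝓝 l)) :
    IntegrableOn g' (Ioi a) := by
  have left : ∀ x ∈ Ioo a c, x ∈ Ioi a \ {c} := fun x hx => ⟨hx.1, hx.2.ne⟩
  have right : ∀ x ∈ Ioi c, x ∈ Ioi a \ {c} := fun x hx => ⟨hac.trans_lt hx, hx.ne'⟩
  rw [← Ioc_union_Ioi_eq_Ioi hac]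
  exact (intervalIntegral.integrableOn_deriv_of_nonneg (hcont.mono Icc_subset_Ici_self)
      (fun x hx => hderiv x (left x hx)) fun x hx => hpos x (left x hx)).union
    (integrableOn_Ioi_deriv_of_nonneg ((hcont c hac).mono (Ici_subset_Ici.2 hac))
      (fun x hx => hderiv x (right x hx)) (fun x hx => hpos x (right x hx)) hg)

end DerivativeIntegrability

theorem integral_Ioi_of_hasDerivAt_off_countable_of_tendsto {E : Type*} [NormedAddCommGroup E]
    [NormedSpace ℝ E] [CompleteSpace E] {f f' : ℝ → E} {a : ℝ} {m : E} {s : Set ℝ}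
    (hs : s.Countable) (hcont : ContinuousOn f (Ici a))
    (hderiv : ∀ x ∈ Ioi a \ s, HasDerivAt f (f' x) x) (hint : IntegrableOn f' (Ioi a))
    (hf : Tendsto f atTop (𝓝 m)) : ∫ x in Ioi a, f' x = m - f a := by
  refine tendsto_nhds_unique (intervalIntegral_tendsto_integral_Ioi a hint tendsto_id) ?_
  refine (hf.sub_const _).congr' ?_
  filter_upwards [Ioi_mem_atTop a] with x hx
  exact (integral_eq_of_hasDerivAt_off_countable_of_le f f' hx.le hs
    (hcont.mono Icc_subset_Ici_self) (fun y hy => hderiv y ⟨hy.1.1, hy.2⟩)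
    ((intervalIntegrable_iff_integrableOn_Ioc_of_le hx.le).2
      (hint.mono_set Ioc_subset_Ioi_self))).symm

namespace ExcursionCriticality

lemma exp_sub_one_ne_zero {y : ℝ} (hy : y ≠ 0) : exp y - 1 ≠ 0 :=
  sub_ne_zero.2 fun h => hy (exp_eq_one_iff y |>.1 h)

lemma one_sub_exp_neg_ne_zero {y : ℝ} (hy : y ≠ 0) : 1 - exp (-y) ≠ 0 :=
  sub_ne_zero.2 fun h => hy (by simpa using (exp_eq_one_iff (-y)).1 h.symm)

lemma add_log_one_sub_exp_neg (y : ℝ) : y + log (1 - exp (-y)) = log (exp y - 1) := by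
  rcases eq_or_ne y 0 with rfl | hy
  · simp
  rw [show exp y - 1 = exp y * (1 - exp (-y)) by rw [mul_sub, ← exp_add]; simp,
    log_mul (exp_ne_zero y) (one_sub_exp_neg_ne_zero hy), log_exp]

lemma continuous_dslope_exp : Continuous (dslope exp 0) :=
  continuousOn_univ.1 <| (continuousOn_dslope univ_mem).2
    ⟨continuous_exp.continuousOn, differentiableAt_exp⟩

lemma dslope_exp_of_ne {y : ℝ} (hy : y ≠ 0) : dslope exp 0 y = (exp y - 1) / y := by
  simp [dslope_of_ne _ hy, slope_def_field]

lemma dslope_exp_ne_zero (y : ℝ) : dslope exp 0 y ≠ 0 := by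
  rcases eq_or_ne y 0 with rfl | hy
  · simp [dslope_same]
  · rw [dslope_exp_of_ne hy]
    exact div_ne_zero (exp_sub_one_ne_zero hy) hy

noncomputable def g₁ (y : ℝ) : ℝ :=
  exp (-y) * ((y - 1 + exp (-y)) / (1 - exp (-y)) ^ 2 + 1)

/-- `dslope exp 0 y` is `(exp y - 1) / y`, extended by `1` at `0`, so this is
`-y / (exp y - 1) - exp (-y)` with its removable singularity at `0` filled in. -/
noncomputable def G₁ (y : ℝ) : ℝ :=
  -(dslope exp 0 y)⁻¹ - exp (-y)

noncomputable def g₂ (y : ℝ) : ℝ :=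
  exp (-y) * log (exp y - 1)

/-- Since `log x = log |x|`, this is a primitive of `g₂` on both sides of `0`. -/
noncomputable def G₂ (y : ℝ) : ℝ :=
  (1 - exp (-y)) * log (1 - exp (-y)) - y * exp (-y)

lemma g₁_nonneg (y : ℝ) : 0 ≤ g₁ y := by
  have : 0 ≤ y - 1 + exp (-y) := by linarith [add_one_le_exp (-y)]
  unfold g₁
  positivity

lemma G₁_of_ne {y : ℝ} (hy : y ≠ 0) : G₁ y = -y / (exp y - 1) - exp (-y) := by
  rw [G₁, dslope_exp_of_ne hy, inv_div, neg_div]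

lemma continuous_G₁ : Continuous G₁ :=
  (continuous_dslope_exp.inv₀ dslope_exp_ne_zero).neg.sub (by fun_prop)

lemma hasDerivAt_G₁ {y : ℝ} (hy : y ≠ 0) : HasDerivAt G₁ (g₁ y) y := by
  have hu := exp_sub_one_ne_zero hy
  have hderiv : HasDerivAt (fun x => -x / (exp x - 1) - exp (-x))
      ((-1 * (exp y - 1) - -y * exp y) / (exp y - 1) ^ 2 - exp (-y) * -1) y :=
    ((hasDerivAt_id y).neg.div ((hasDerivAt_exp y).sub_const 1) hu).sub (hasDerivAt_id y).neg.exp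
  have hval : (-1 * (exp y - 1) - -y * exp y) / (exp y - 1) ^ 2 - exp (-y) * -1 = g₁ y := by
    have hv := one_sub_exp_neg_ne_zero hy
    rw [exp_neg] at hv
    rw [g₁, exp_neg]
    field_simp
    ring
  rw [← hval]
  exact hderiv.congr_of_eventuallyEq <| (eventually_ne_nhds hy).mono fun x hx => G₁_of_ne hx

lemma tendsto_G₁_atTop : Tendsto G₁ atTop (𝓝 0) := by
  have hslope : Tendsto (dslope exp 0) atTop atTop := by
    refine ((tendsto_exp_div_pow_atTop 1).atTop_add tendsto_inv_atTop_zero.neg).congr' ?_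
    filter_upwards [eventually_ne_atTop 0] with y hy
    rw [dslope_exp_of_ne hy, sub_div, one_div, pow_one, sub_eq_add_neg]
  show Tendsto (fun y => -(dslope exp 0 y)⁻¹ - exp (-y)) atTop (𝓝 0)
  simpa using hslope.inv_tendsto_atTop.neg.sub tendsto_exp_neg_atTop_nhds_zero

lemma continuous_G₂ : Continuous G₂ :=
  (continuous_mul_log.comp (by fun_prop : Continuous fun y => 1 - exp (-y))).sub (by fun_prop)

lemma hasDerivAt_G₂ {y : ℝ} (hy : y ≠ 0) : HasDerivAt G₂ (g₂ y) y := by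
  have hs : HasDerivAt (fun x => 1 - exp (-x)) (exp (-y)) y := by
    simpa using ((hasDerivAt_id y).neg.exp).const_sub 1
  have h₁ : HasDerivAt (fun x => (1 - exp (-x)) * log (1 - exp (-x)))
      ((log (1 - exp (-y)) + 1) * exp (-y)) y :=
    (hasDerivAt_mul_log (one_sub_exp_neg_ne_zero hy)).comp (h := fun x => 1 - exp (-x)) y hs
  have h₂ : HasDerivAt (fun x => x * exp (-x)) (1 * exp (-y) + y * (exp (-y) * -1)) y :=
    (hasDerivAt_id' y).mul (hasDerivAt_id' y).neg.exp
  have hval : (log (1 - exp (-y)) + 1) * exp (-y) - (1 * exp (-y) + y * (exp (-y) * -1))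
      = g₂ y := by
    rw [g₂, ← add_log_one_sub_exp_neg]
    ring
  exact hval ▸ h₁.sub h₂

lemma tendsto_G₂_atTop : Tendsto G₂ atTop (𝓝 0) := by
  have hs : Tendsto (fun y => 1 - exp (-y)) atTop (𝓝 1) := by
    simpa using tendsto_exp_neg_atTop_nhds_zero.const_sub 1
  show Tendsto (fun y => (1 - exp (-y)) * log (1 - exp (-y)) - y * exp (-y)) atTop (𝓝 0)
  convert ((continuous_mul_log.tendsto 1).comp hs).sub
    (by simpa using tendsto_pow_mul_exp_neg_atTop_nhds_zero 1) using 2 <;> simp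

lemma g₂_nonpos {y : ℝ} (hy : y ≤ log 2) : g₂ y ≤ 0 := by
  have : exp y ≤ 2 := by simpa [exp_log] using exp_le_exp.2 hy
  refine mul_nonpos_of_nonneg_of_nonpos (exp_pos _).le ?_
  rw [← log_abs]
  exact log_nonpos (abs_nonneg _) (abs_le.2 ⟨by linarith [exp_pos y], by linarith⟩)

lemma g₂_nonneg {y : ℝ} (hy : log 2 ≤ y) : 0 ≤ g₂ y := by
  have : 2 ≤ exp y := by simpa [exp_log] using exp_le_exp.2 hy
  exact mul_nonneg (exp_pos _).le (log_nonneg (by linarith))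

lemma integrand_eq_g₁_add_g₂ {y : ℝ} (hy : y ≠ 0) :
    (y * exp (2 * y) - (exp y - 1) + (exp y - 1) ^ 2 * log |exp y - 1|)
      * exp (-y) / (exp y - 1) ^ 2 = g₁ y + g₂ y := by
  have hu := exp_sub_one_ne_zero hy
  have hv := one_sub_exp_neg_ne_zero hy
  rw [exp_neg] at hv
  rw [g₁, g₂, log_abs, two_mul, exp_add, exp_neg]
  field_simp
  ring

lemma neg_log_two_lt_zero : -log 2 < 0 := neg_neg_of_pos (log_pos one_lt_two)

lemma integrableOn_g₁ : IntegrableOn g₁ (Ioi (-log 2)) :=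
  integrableOn_Ioi_deriv_of_nonneg_off_point neg_log_two_lt_zero.le continuous_G₁.continuousOn
    (fun _ hy => hasDerivAt_G₁ hy.2) (fun y _ => g₁_nonneg y) tendsto_G₁_atTop

lemma integrableOn_g₂ : IntegrableOn g₂ (Ioi (-log 2)) := by
  have hle : -log 2 ≤ log 2 := by linarith [log_pos one_lt_two]
  rw [← Ioc_union_Ioi_eq_Ioi hle]
  refine IntegrableOn.union ?_ ?_
  · simpa using (integrableOn_Ioc_deriv_of_nonneg_off_point (g := fun y => -G₂ y)
      neg_log_two_lt_zero.le (log_pos one_lt_two).le continuous_G₂.neg.continuousOn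
      (fun y hy => (hasDerivAt_G₂ hy.2).neg) fun y hy => neg_nonneg.2 (g₂_nonpos hy.1.2.le)).neg
  · exact integrableOn_Ioi_deriv_of_nonneg continuous_G₂.continuousWithinAt
      (fun y hy => hasDerivAt_G₂ ((log_pos one_lt_two).trans hy).ne')
      (fun y hy => g₂_nonneg hy.le) tendsto_G₂_atTop

lemma G₁_add_G₂_neg_log_two : G₁ (-log 2) + G₂ (-log 2) = -2 := by
  rw [G₁_of_ne neg_log_two_lt_zero.ne, G₂, neg_neg, exp_log two_pos, exp_neg, exp_log two_pos]
  norm_num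
  ring

end ExcursionCriticality

open ExcursionCriticality

theorem stmt_13 :
    ∫ y in Set.Ioi (-Real.log 2),
      (y * Real.exp (2 * y) - (Real.exp y - 1)
          + (Real.exp y - 1) ^ 2 * Real.log |Real.exp y - 1|)
        * Real.exp (-y) / (Real.exp y - 1) ^ 2 = 2 := by
  have hae : ∀ᵐ y ∂volume.restrict (Ioi (-log 2)),
      (y * exp (2 * y) - (exp y - 1) + (exp y - 1) ^ 2 * log |exp y - 1|)
        * exp (-y) / (exp y - 1) ^ 2 = g₁ y + g₂ y :=
    ae_restrict_of_ae <| (volume.ae_ne 0).mono fun y hy => integrand_eq_g₁_add_g₂ hy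
  rw [integral_congr_ae hae, integral_Ioi_of_hasDerivAt_off_countable_of_tendsto
      (f := fun y => G₁ y + G₂ y) (countable_singleton 0)
      (continuous_G₁.add continuous_G₂).continuousOn
      (fun y hy => (hasDerivAt_G₁ hy.2).add (hasDerivAt_G₂ hy.2))
      (integrableOn_g₁.add integrableOn_g₂) (by simpa using tendsto_G₁_atTop.add tendsto_G₂_atTop),
    G₁_add_G₂_neg_log_two]
  norm_num
end

section
/- −(8/π) + (2/π)·∫_{−ln 2}^{∞} (e^{2y} − 1 − 2(e^y − 1) + (1 − e^y)²)·e^{−y}/(e^y − 1)² dy = 0. -/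
open MeasureTheory

theorem stmt_14 :
    -(8 / Real.pi) + (2 / Real.pi) *
        (∫ y in Set.Ioi (-Real.log 2),
          (Real.exp (2 * y) - 1 - 2 * (Real.exp y - 1) + (1 - Real.exp y) ^ 2)
            * Real.exp (-y) / (Real.exp y - 1) ^ 2) = 0 := by
  have h : (∫ y in Set.Ioi (-Real.log 2),
      (Real.exp (2 * y) - 1 - 2 * (Real.exp y - 1) + (1 - Real.exp y) ^ 2)
        * Real.exp (-y) / (Real.exp y - 1) ^ 2)
      = ∫ y in Set.Ioi (-Real.log 2), 2 * Real.exp (-y) := by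
    apply setIntegral_congr_ae measurableSet_Ioi
    have h0 : (volume : Measure ℝ) {(0 : ℝ)} = 0 := measure_singleton 0
    filter_upwards [measure_eq_zero_iff_ae_notMem.mp h0] with y hy _
    have hne : Real.exp y - 1 ≠ 0 := by
      intro h
      exact hy (Real.exp_injective (by rw [Real.exp_zero]; linarith))
    rw [two_mul, Real.exp_add]
    field_simp
    ring
  rw [h, MeasureTheory.integral_const_mul, integral_exp_neg_Ioi, neg_neg,
    Real.exp_log (by norm_num : (0:ℝ) < 2)]
  have hpi : Real.pi ≠ 0 := Real.pi_ne_zero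
  field_simp
  ring
end

section
/- Let R > 0 and let u = (x, y) : [0, R] → ℝ² be continuous with y(0) = y(R) = 0. Fix t ∈ [0, R] with y(t) > 0. For a ∈ [0, y(t)], define T_a^← := inf{ s ∈ [0, t] : y(t − s) = a } and T_a^→ := inf{ s ∈ [0, R − t] : y(t + s) = a } (both sets are nonempty by the intermediate value theorem, since y(0) = y(R) = 0 ≤ a ≤ y(t)), and set F(a) := x(t + T_a^→) − x(t − T_a^←). Then F is càdlàg on [0, y(t)]: F is right-continuous at every a ∈ [0, y(t)) (as a function on [0, y(t)]), and F has a (finite) left limit at every a ∈ (0, y(t)]. -/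
/-!
The endpoints of the excursion are `t + Tr a` and `t - Tl a`, where `Tr` and `Tl` are first hitting
times of the level `a` by continuous paths running from `y t` down to `0`. A first hitting time is
antitone in the level, hence has one-sided limits; it is right-continuous because its monotone
right limit `L` satisfies `g L = a` by continuity, so `L` cannot exceed the first hitting time.
Composing with the continuous `x` preserves both properties.
-/

open Filter Set Topology

/-- The first time `s ∈ [0, c]` at which `g s = a`; it is `0` when `a` is never hit. -/
noncomputable def firstHit (g : ℝ → ℝ) (c a : ℝ) : ℝ :=
  sInf {s : ℝ | s ∈ Icc 0 c ∧ g s = a}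

def IsCadlagOn (f : ℝ → ℝ) (b : ℝ) : Prop :=
  (∀ a ∈ Ico 0 b, ContinuousWithinAt f (Icc a b) a) ∧
    ∀ a ∈ Ioc 0 b, ∃ L : ℝ, Tendsto f (𝓝[Ico 0 a] a) (𝓝 L)

namespace IsCadlagOn

variable {f g : ℝ → ℝ} {b : ℝ}

theorem sub (hf : IsCadlagOn f b) (hg : IsCadlagOn g b) : IsCadlagOn (f - g) b := by
  refine ⟨fun a ha => (hf.1 a ha).sub (hg.1 a ha), fun a ha => ?_⟩
  obtain ⟨L, hL⟩ := hf.2 a ha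
  obtain ⟨M, hM⟩ := hg.2 a ha
  exact ⟨L - M, hL.sub hM⟩

theorem comp_continuousOn {φ : ℝ → ℝ} {s : Set ℝ} (hf : IsCadlagOn f b) (hs : IsClosed s)
    (hφ : ContinuousOn φ s) (hfs : ∀ a, f a ∈ s) : IsCadlagOn (φ ∘ f) b := by
  refine ⟨fun a ha => (hφ _ (hfs a)).comp (hf.1 a ha) fun a' _ => hfs a', fun a ha => ?_⟩
  obtain ⟨L, hL⟩ := hf.2 a ha
  have : (𝓝[Ico 0 a] a).NeBot := by rw [nhdsWithin_Ico_eq_nhdsLT ha.1]; infer_instance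
  have hLs : L ∈ s := hs.mem_of_tendsto hL (.of_forall hfs)
  exact ⟨φ L, (hφ L hLs).tendsto.comp (tendsto_nhdsWithin_iff.2 ⟨hL, .of_forall hfs⟩)⟩

end IsCadlagOn

section firstHit

variable {g : ℝ → ℝ} {c a : ℝ}

theorem firstHit_le {s : ℝ} (hs : s ∈ Icc 0 c) (hgs : g s = a) : firstHit g c a ≤ s :=
  csInf_le ⟨0, fun _ h => h.1.1⟩ ⟨hs, hgs⟩

theorem firstHit_mem_Icc (hc : 0 ≤ c) : firstHit g c a ∈ Icc 0 c := by
  refine ⟨Real.sInf_nonneg fun s hs => hs.1.1, ?_⟩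
  rcases eq_empty_or_nonempty {s : ℝ | s ∈ Icc 0 c ∧ g s = a} with h | ⟨s, hs⟩
  · rw [firstHit, h, Real.sInf_empty]
    exact hc
  · exact (firstHit_le hs.1 hs.2).trans hs.1.2

theorem apply_firstHit (hc : 0 ≤ c) (hg : ContinuousOn g (Icc 0 c))
    (ha : a ∈ Icc (g c) (g 0)) : g (firstHit g c a) = a := by
  obtain ⟨s, hs, hgs⟩ := intermediate_value_Icc' hc hg ha
  have hclosed : IsClosed {s : ℝ | s ∈ Icc 0 c ∧ g s = a} :=
    hg.preimage_isClosed_of_isClosed isClosed_Icc isClosed_singleton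
  exact (hclosed.csInf_mem ⟨s, hs, hgs⟩ ⟨0, fun _ h => h.1.1⟩).2

theorem antitoneOn_firstHit (hc : 0 ≤ c) (hg : ContinuousOn g (Icc 0 c)) :
    AntitoneOn (firstHit g c) (Icc (g c) (g 0)) := by
  intro a ha a' ha' haa'
  obtain ⟨hT0, hTc⟩ := firstHit_mem_Icc (g := g) (a := a) hc
  have hsub : Icc 0 (firstHit g c a) ⊆ Icc 0 c := Icc_subset_Icc_right hTc
  obtain ⟨s, hs, hgs⟩ := intermediate_value_Icc' hT0 (hg.mono hsub)
    (by rw [apply_firstHit hc hg ha]; exact ⟨haa', ha'.2⟩)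
  exact (firstHit_le (hsub hs) hgs).trans hs.2

theorem continuousWithinAt_firstHit_Ici (hc : 0 ≤ c) (hg : ContinuousOn g (Icc 0 c))
    (ha : a ∈ Ico (g c) (g 0)) : ContinuousWithinAt (firstHit g c) (Ici a) a := by
  have hIoo : Ioo a (g 0) ⊆ Icc (g c) (g 0) := Ioo_subset_Icc_self.trans (Icc_subset_Icc_left ha.1)
  have hT : ∀ a', firstHit g c a' ∈ Icc 0 c := fun _ => firstHit_mem_Icc hc
  have hlim := ((antitoneOn_firstHit hc hg).mono hIoo).tendsto_nhdsWithin_Ioo_right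
    (nonempty_Ioo.2 ha.2) ⟨c, forall_mem_image.2 fun a' _ => (hT a').2⟩
  set L := sSup (firstHit g c '' Ioo a (g 0))
  have hL : L ∈ Icc 0 c := isClosed_Icc.mem_of_tendsto hlim (.of_forall hT)
  have hgL : g L = a := by
    have hcomp : Tendsto (g ∘ firstHit g c) (𝓝[>] a) (𝓝 (g L)) :=
      (hg L hL).tendsto.comp (tendsto_nhdsWithin_iff.2 ⟨hlim, .of_forall hT⟩)
    have hid : g ∘ firstHit g c =ᶠ[𝓝[>] a] id := by
      filter_upwards [Ioo_mem_nhdsGT ha.2] with a' ha'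
      exact apply_firstHit hc hg (hIoo ha')
    exact tendsto_nhds_unique hcomp ((tendsto_id.mono_left nhdsWithin_le_nhds).congr' hid.symm)
  have hLa : L = firstHit g c a := by
    refine le_antisymm (csSup_le ((nonempty_Ioo.2 ha.2).image _) ?_) (firstHit_le hL hgL)
    rintro _ ⟨a', ha', rfl⟩
    exact antitoneOn_firstHit hc hg (Ico_subset_Icc_self ha) (hIoo ha') ha'.1.le
  rw [← continuousWithinAt_Ioi_iff_Ici, ContinuousWithinAt, ← hLa]
  exact hlim

theorem exists_tendsto_firstHit_nhdsLT (hc : 0 ≤ c) (hg : ContinuousOn g (Icc 0 c))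
    (ha : a ∈ Ioc (g c) (g 0)) : ∃ M, Tendsto (firstHit g c) (𝓝[<] a) (𝓝 M) :=
  ⟨_, ((antitoneOn_firstHit hc hg).mono (Ioo_subset_Icc_self.trans (Icc_subset_Icc_right ha.2)))
    |>.tendsto_nhdsWithin_Ioo_left (nonempty_Ioo.2 ha.1)
      ⟨0, forall_mem_image.2 fun _ _ => (firstHit_mem_Icc hc).1⟩⟩

theorem isCadlagOn_firstHit {b : ℝ} (hc : 0 ≤ c) (hg : ContinuousOn g (Icc 0 c)) (hgc : g c = 0)
    (hg0 : g 0 = b) : IsCadlagOn (firstHit g c) b := by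
  subst hg0
  refine ⟨fun a ha => ?_, fun a ha => ?_⟩
  · exact (continuousWithinAt_firstHit_Ici hc hg (hgc ▸ ha)).mono Icc_subset_Ici_self
  · rw [nhdsWithin_Ico_eq_nhdsLT ha.1]
    exact exists_tendsto_firstHit_nhdsLT hc hg (hgc ▸ ha)

end firstHit

theorem mapsTo_add_Icc {t R : ℝ} (ht : t ∈ Icc 0 R) : MapsTo (t + ·) (Icc 0 (R - t)) (Icc 0 R) :=
  fun s hs => ⟨by linarith [hs.1, ht.1], by linarith [hs.2]⟩

theorem mapsTo_sub_Icc {t R : ℝ} (ht : t ∈ Icc 0 R) : MapsTo (t - ·) (Icc 0 t) (Icc 0 R) :=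
  fun s hs => ⟨by linarith [hs.2], by linarith [hs.1, ht.2]⟩

theorem stmt_16_general (R : ℝ) (x y : ℝ → ℝ)
    (hx : ContinuousOn x (Set.Icc 0 R)) (hy : ContinuousOn y (Set.Icc 0 R))
    (hy0 : y 0 = 0) (hyR : y R = 0)
    (t : ℝ) (ht : t ∈ Set.Icc 0 R)
    (Tl Tr : ℝ → ℝ)
    (hTl : ∀ a, Tl a = sInf {s : ℝ | s ∈ Set.Icc 0 t ∧ y (t - s) = a})
    (hTr : ∀ a, Tr a = sInf {s : ℝ | s ∈ Set.Icc 0 (R - t) ∧ y (t + s) = a})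
    (F : ℝ → ℝ) (hF : ∀ a, F a = x (t + Tr a) - x (t - Tl a)) :
    (∀ a ∈ Set.Ico 0 (y t), ContinuousWithinAt F (Set.Icc a (y t)) a) ∧
    (∀ a ∈ Set.Ioc 0 (y t), ∃ L : ℝ,
      Tendsto F (nhdsWithin a (Set.Ico 0 a)) (nhds L)) := by
  have hRt : 0 ≤ R - t := sub_nonneg.2 ht.2
  have hTr' : Tr = firstHit (fun s => y (t + s)) (R - t) := funext hTr
  have hTl' : Tl = firstHit (fun s => y (t - s)) t := funext hTl
  have hshiftR := (continuous_const_add t).continuousOn (s := Icc 0 (R - t))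
  have hshiftL := (continuous_sub_left t).continuousOn (s := Icc 0 t)
  have hTr_cadlag : IsCadlagOn Tr (y t) := hTr' ▸
    isCadlagOn_firstHit hRt (hy.comp hshiftR (mapsTo_add_Icc ht)) (by simp [hyR]) (by simp)
  have hTl_cadlag : IsCadlagOn Tl (y t) := hTl' ▸
    isCadlagOn_firstHit ht.1 (hy.comp hshiftL (mapsTo_sub_Icc ht)) (by simp [hy0]) (by simp)
  have hright : IsCadlagOn ((fun s => x (t + s)) ∘ Tr) (y t) :=
    hTr_cadlag.comp_continuousOn isClosed_Icc (hx.comp hshiftR (mapsTo_add_Icc ht))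
      fun _ => hTr' ▸ firstHit_mem_Icc hRt
  have hleft : IsCadlagOn ((fun s => x (t - s)) ∘ Tl) (y t) :=
    hTl_cadlag.comp_continuousOn isClosed_Icc (hx.comp hshiftL (mapsTo_sub_Icc ht))
      fun _ => hTl' ▸ firstHit_mem_Icc ht.1
  rw [show F = (fun s => x (t + s)) ∘ Tr - (fun s => x (t - s)) ∘ Tl from funext hF]
  exact hright.sub hleft

/-- The size `F(a)` of the excursion above level `a` straddling time `t` is a
càdlàg function of the level `a ∈ [0, y t]`. -/
theorem stmt_16 (R : ℝ) (hR : 0 < R) (x y : ℝ → ℝ)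
    (hx : ContinuousOn x (Set.Icc 0 R)) (hy : ContinuousOn y (Set.Icc 0 R))
    (hy0 : y 0 = 0) (hyR : y R = 0)
    (t : ℝ) (ht : t ∈ Set.Icc 0 R) (hyt : 0 < y t)
    (Tl Tr : ℝ → ℝ)
    (hTl : ∀ a, Tl a = sInf {s : ℝ | s ∈ Set.Icc 0 t ∧ y (t - s) = a})
    (hTr : ∀ a, Tr a = sInf {s : ℝ | s ∈ Set.Icc 0 (R - t) ∧ y (t + s) = a})
    (F : ℝ → ℝ) (hF : ∀ a, F a = x (t + Tr a) - x (t - Tl a)) :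
    (∀ a ∈ Set.Ico 0 (y t), ContinuousWithinAt F (Set.Icc a (y t)) a) ∧
    (∀ a ∈ Set.Ioc 0 (y t), ∃ L : ℝ,
      Tendsto F (nhdsWithin a (Set.Ico 0 a)) (nhds L)) :=
  stmt_16_general R x y hx hy hy0 hyR t ht Tl Tr hTl hTr F hF
end
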